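/- If Λ is separating and T preserves weak pullbacks, then every difunctional Λ-bisimulation between T-coalgebras is a T-bisimulation. -/

import Mathlib

open CategoryTheory

universe u

/-- A monotone predicate lifting for a `Set`-endofunctor `T`:
a natural transformation `Q → Q ∘ T^op` whose components are monotone. -/
structure PredLifting (T : Type u ⥤ Type u) where
  app : ∀ X : Type u, Set X → Set (T.obj X)
  natural : ∀ {X Y : Type u} (f : X → Y) (A : Set Y),
    app X (f ⁻¹' A) = T.map (TypeCat.ofHom f) ⁻¹' app Y A
  mono : ∀ (X : Type u) ⦃A B : Set X⦄, A ⊆ B → app X A ⊆ app X B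

/-- Relational image `S[A]`. -/
def RelImage {X Y : Type u} (S : X → Y → Prop) (A : Set X) : Set Y :=
  {y | ∃ x ∈ A, S x y}

/-- `S` is a `Λ`-simulation from the `T`-coalgebra `(X,ξ)` to `(Y,ζ)`. -/
def IsSim {T : Type u ⥤ Type u} (Λ : Set (PredLifting T))
    {X Y : Type u} (ξ : X → T.obj X) (ζ : Y → T.obj Y)
    (S : X → Y → Prop) : Prop :=
  ∀ x y, S x y → ∀ L ∈ Λ, ∀ A : Set X,
    ξ x ∈ L.app X A → ζ y ∈ L.app Y (RelImage S A)

/-- `S` is a `T`-bisimulation: it carries a coalgebra structure making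
both projections coalgebra morphisms. -/
def IsTBisim (T : Type u ⥤ Type u) {X Y : Type u}
    (ξ : X → T.obj X) (ζ : Y → T.obj Y) (S : X → Y → Prop) : Prop :=
  ∃ ρ : {p : X × Y // S p.1 p.2} → T.obj {p : X × Y // S p.1 p.2},
    (∀ s, T.map (TypeCat.ofHom fun q : {p : X × Y // S p.1 p.2} => q.1.1) (ρ s) = ξ s.1.1) ∧
    (∀ s, T.map (TypeCat.ofHom fun q : {p : X × Y // S p.1 p.2} => q.1.2) (ρ s) = ζ s.1.2)

/-- `Λ` is separating. -/
def Separating {T : Type u ⥤ Type u} (Λ : Set (PredLifting T)) : Prop :=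
  ∀ (X : Type u) (t t' : T.obj X),
    (∀ L ∈ Λ, ∀ A : Set X, t ∈ L.app X A ↔ t' ∈ L.app X A) → t = t'

/-- `T` preserves weak pullbacks (of sets, in the usual concrete sense). -/
def PreservesWeakPullbacks (T : Type u ⥤ Type u) : Prop :=
  ∀ {X Y Z : Type u} (f : X → Z) (g : Y → Z)
    (u : T.obj X) (v : T.obj Y), T.map (TypeCat.ofHom f) u = T.map (TypeCat.ofHom g) v →
      ∃ w : T.obj {p : X × Y // f p.1 = g p.2},
        T.map (TypeCat.ofHom fun p : {p : X × Y // f p.1 = g p.2} => p.1.1) w = u ∧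
        T.map (TypeCat.ofHom fun p : {p : X × Y // f p.1 = g p.2} => p.1.2) w = v

/-- A relation is difunctional. -/
def Difunctional {X Y : Type u} (S : X → Y → Prop) : Prop :=
  ∀ x y z w, S x y → S z y → S z w → S x w

/-! A difunctional relation is a pullback `{(x, y) | f x = g y}` of two maps into some `Q`.
Since `Λ` is separating and its liftings are natural and monotone, a `Λ`-bisimulation contained
in such a pullback relates only states with `T f (ξ x) = T g (ζ y)`; weak pullback preservation
then lifts each such pair of successor structures to `T` of the pullback, i.e. to `T S`. -/

/-- Putting `x` itself into `f x` keeps apart states without `S`-successors. -/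
theorem Difunctional.exists_iff_eq {X Y : Type u} {S : X → Y → Prop} (hS : Difunctional S) :
    ∃ (f : X → Set X) (g : Y → Set X), ∀ x y, S x y ↔ f x = g y := by
  refine ⟨fun x => {x' | x' = x ∨ ∃ y, S x y ∧ S x' y}, fun y => {x' | S x' y},
    fun x y => ⟨fun hxy => ?_, fun hfg => ?_⟩⟩
  · ext x'
    constructor
    · rintro (rfl | ⟨y', hxy', hx'y'⟩)
      exacts [hxy, hS x' y' x y hx'y' hxy' hxy]
    · exact fun hx'y => Or.inr ⟨y, hxy, hx'y⟩
  · exact (Set.ext_iff.mp hfg x).mp (Or.inl rfl)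

theorem relImage_preimage_subset {X Y Q : Type u} {S : X → Y → Prop} {f : X → Q} {g : Y → Q}
    (hfg : ∀ x y, S x y → f x = g y) (A : Set Q) : RelImage S (f ⁻¹' A) ⊆ g ⁻¹' A := by
  rintro y ⟨x, hx, hxy⟩
  rwa [Set.mem_preimage, ← hfg x y hxy]

theorem IsSim.map_mem {T : Type u ⥤ Type u} {Λ : Set (PredLifting T)} {X Y Q : Type u}
    {ξ : X → T.obj X} {ζ : Y → T.obj Y} {S : X → Y → Prop} (hS : IsSim Λ ξ ζ S)
    {f : X → Q} {g : Y → Q} (hfg : ∀ x y, S x y → f x = g y) {x : X} {y : Y} (hxy : S x y)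
    {L : PredLifting T} (hL : L ∈ Λ) {A : Set Q}
    (hx : T.map (TypeCat.ofHom f) (ξ x) ∈ L.app Q A) :
    T.map (TypeCat.ofHom g) (ζ y) ∈ L.app Q A := by
  rw [← Set.mem_preimage, ← L.natural] at hx ⊢
  exact L.mono Y (relImage_preimage_subset hfg A) (hS x y hxy L hL _ hx)

theorem map_eq_map_of_isSim {T : Type u ⥤ Type u} {Λ : Set (PredLifting T)}
    (hsep : Separating Λ) {X Y Q : Type u} {ξ : X → T.obj X} {ζ : Y → T.obj Y}
    {S : X → Y → Prop} (h1 : IsSim Λ ξ ζ S) (h2 : IsSim Λ ζ ξ (fun y x => S x y))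
    {f : X → Q} {g : Y → Q} (hfg : ∀ x y, S x y → f x = g y) {x : X} {y : Y} (hxy : S x y) :
    T.map (TypeCat.ofHom f) (ξ x) = T.map (TypeCat.ofHom g) (ζ y) :=
  hsep Q _ _ fun _ hL _ =>
    ⟨h1.map_mem hfg hxy hL, h2.map_mem (fun y x h => (hfg x y h).symm) hxy hL⟩

theorem isTBisim_of_map_eq {T : Type u ⥤ Type u} (hwp : PreservesWeakPullbacks T)
    {X Y Q : Type u} {ξ : X → T.obj X} {ζ : Y → T.obj Y} {S : X → Y → Prop}
    {f : X → Q} {g : Y → Q} (hfg : ∀ x y, S x y ↔ f x = g y)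
    (hmap : ∀ x y, S x y → T.map (TypeCat.ofHom f) (ξ x) = T.map (TypeCat.ofHom g) (ζ y)) :
    IsTBisim T ξ ζ S := by
  choose w hw₁ hw₂ using fun s : {p : X × Y // S p.1 p.2} =>
    hwp f g (ξ s.1.1) (ζ s.1.2) (hmap _ _ s.2)
  let e : {p : X × Y // f p.1 = g p.2} → {p : X × Y // S p.1 p.2} :=
    fun p => ⟨p.1, (hfg _ _).2 p.2⟩
  refine ⟨fun s => T.map (TypeCat.ofHom e) (w s), fun s => ?_, fun s => ?_⟩
  · rw [← hw₁ s, ← Functor.map_comp_apply]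
    rfl
  · rw [← hw₂ s, ← Functor.map_comp_apply]
    rfl

theorem difunctional_lambda_bisim_is_t_bisim {T : Type u ⥤ Type u}
    {Λ : Set (PredLifting T)} (hsep : Separating Λ)
    (hwp : PreservesWeakPullbacks T) {X Y : Type u}
    (ξ : X → T.obj X) (ζ : Y → T.obj Y) (S : X → Y → Prop)
    (hdif : Difunctional S)
    (h1 : IsSim Λ ξ ζ S) (h2 : IsSim Λ ζ ξ (fun y x => S x y)) :
    IsTBisim T ξ ζ S := by
  obtain ⟨f, g, hfg⟩ := hdif.exists_iff_eq
  exact isTBisim_of_map_eq hwp hfg fun x y =>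
    map_eq_map_of_isSim hsep h1 h2 fun x y => (hfg x y).1
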